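/- arXiv:1511.03913 — 9 statements merged into one kernel-verified Lean document; each statement's English description precedes it below -/
import Mathlib

section
/- Let S = {s_1 < s_2 < ... < s_n} be a (set) signature for a monograph G with m negative values (s_1 < ... < s_m < 0 ≤ s_{m+1}). Then for each r ≥ 1, the vertex labeled s_{n-r+1} (the r-th largest non-negative signature value) is adjacent to at most r−1 vertices with negative labels. -/
/-!
Each negative neighbour `w` of `v` forces the label `ℓ v - ℓ w = |ℓ v - ℓ w|` into the signature,
and this label is strictly larger than `ℓ v ≥ 0`. Since `w ↦ ℓ v - ℓ w` is injective on the
vertices, the negative neighbours of `v` inject into the labels strictly above `ℓ v`, of which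
there are at most `r - 1`.
-/

section

open Finset

variable {V : Type*}

theorem card_filter_lt_lt_card_filter_le [Fintype V] {α : Type*} [LinearOrder α] (f : V → α)
    (v : V) :
    #{u | f v < f u} < #{u | f v ≤ f u} := by
  refine card_lt_card ⟨monotone_filter_right _ fun _ _ => le_of_lt, fun h => ?_⟩
  exact lt_irrefl (f v) (mem_filter.1 (h (by simp))).2

/-- The adjacency half of the signature condition; injectivity of `ℓ` is kept separate. -/
def IsSignatureLabeling (G : SimpleGraph V) (ℓ : V → ℤ) : Prop :=
  ∀ v w : V, v ≠ w → (G.Adj v w ↔ ∃ u : V, ℓ u = |ℓ v - ℓ w|)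

theorem IsSignatureLabeling.exists_label_eq_sub {G : SimpleGraph V} {ℓ : V → ℤ}
    (hG : IsSignatureLabeling G ℓ) {v w : V} (hadj : G.Adj v w) (hw : ℓ w < ℓ v) :
    ∃ u, ℓ u = ℓ v - ℓ w := by
  simpa only [abs_of_pos (sub_pos.2 hw)] using (hG v w hadj.ne).1 hadj

theorem IsSignatureLabeling.card_neg_neighbors_le_card_filter_lt [Fintype V] [DecidableEq V]
    {G : SimpleGraph V} [DecidableRel G.Adj] {ℓ : V → ℤ} (hG : IsSignatureLabeling G ℓ)
    (hinj : Function.Injective ℓ) {v : V} (hv : 0 ≤ ℓ v) :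
    #{w | G.Adj v w ∧ ℓ w < 0} ≤ #{u | ℓ v < ℓ u} := by
  set A : Finset V := {w | G.Adj v w ∧ ℓ w < 0}
  have himage_subset : A.image (ℓ v - ℓ ·) ⊆ image ℓ {u | ℓ v < ℓ u} := by
    intro x hx
    obtain ⟨w, hwA, rfl⟩ := mem_image.1 hx
    obtain ⟨hadj, hw⟩ := (mem_filter.1 hwA).2
    obtain ⟨u, hu⟩ := hG.exists_label_eq_sub hadj (by omega)
    exact mem_image.2 ⟨u, mem_filter.2 ⟨mem_univ u, by omega⟩, hu⟩
  calc #A = #(A.image (ℓ v - ℓ ·)) :=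
        (card_image_of_injective A (sub_right_injective.comp hinj)).symm
    _ ≤ #(image ℓ {u | ℓ v < ℓ u}) := card_le_card himage_subset
    _ ≤ #{u | ℓ v < ℓ u} := card_image_le

end

/-- In a monograph (set signature realized by an injective labeling `ℓ`), the vertex
labeled with the `r`-th largest non-negative signature value (where `r` counts the
elements of the signature that are `≥ ℓ v`) is adjacent to at most `r - 1` vertices
with negative labels. -/
theorem rth_largest_few_negative_neighbors {V : Type*} [Fintype V] [DecidableEq V]
    (G : SimpleGraph V) [DecidableRel G.Adj] (ℓ : V → ℤ)
    (hinj : Function.Injective ℓ)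
    (hsig : ∀ v w : V, v ≠ w → (G.Adj v w ↔ ∃ u : V, ℓ u = |ℓ v - ℓ w|))
    (v : V) (hv : 0 ≤ ℓ v) :
    (Finset.univ.filter fun w => G.Adj v w ∧ ℓ w < 0).card ≤
      (Finset.univ.filter fun u => ℓ v ≤ ℓ u).card - 1 := by
  have hneg := IsSignatureLabeling.card_neg_neighbors_le_card_filter_lt hsig hinj hv
  have habove := card_filter_lt_lt_card_filter_le ℓ v
  omega
end

section
/- Let S = {s_1 < ... < s_n} be a set signature for a monograph G with exactly m negative values and 0 ∉ S. If the vertex labeled s_n is adjacent to all vertices with positive labels, then s_n = s_{m+1} + s_{n-1} = s_{m+2} + s_{n-2} = ... , i.e., s_n = s_{m+j} + s_{n-j} for all 1 ≤ j with m + j < n − j. -/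
set_option maxHeartbeats 1000000

/-- A strictly decreasing self-map of an interval of naturals is the reversal. -/
lemma aux_rev_interval (a b : ℕ) (g : ℕ → ℕ)
    (hrange : ∀ i, a ≤ i → i ≤ b → a ≤ g i ∧ g i ≤ b)
    (hanti : ∀ i j, a ≤ i → i < j → j ≤ b → g j < g i) :
    ∀ i, a ≤ i → i ≤ b → g i + i = a + b := by
  have key : ∀ d i, a ≤ i → i + d ≤ b → g (i + d) + d ≤ g i := by
    intro d
    induction d with
    | zero => intro i _ _; simp
    | succ d ih =>
      intro i hai hib
      have h1 := hanti (i + d) (i + d + 1) (by omega) (by omega) (by omega)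
      have h2 := ih i hai (by omega)
      have : g (i + (d + 1)) = g (i + d + 1) := by ring_nf
      omega
  intro i hai hib
  have h1 := key (i - a) a le_rfl (by omega)
  have h2 := key (b - i) i hai (by omega)
  have h3 := hrange a le_rfl (by omega)
  have h4 := hrange b (by omega) le_rfl
  have h5 : a + (i - a) = i := by omega
  have h6 : i + (b - i) = b := by omega
  rw [h5] at h1
  rw [h6] at h2
  omega

/-- The Maximum Element Lemma for monographs. Let `s 0 < s 1 < ... < s (n-1)` be a set
signature for a monograph `G` (vertices identified with indices `Fin n`), with exactly
`m` negative values and `0` not in the signature. If the vertex with the maximum label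
`s (n-1)` is adjacent to all vertices with positive labels, then
`s_n = s_{m+j} + s_{n-j}` (1-based indexing) whenever `1 ≤ j` and `m + j < n - j`. -/
theorem max_element_lemma (n m : ℕ) (hn : 0 < n) (s : Fin n → ℤ)
    (hmono : StrictMono s)
    (G : SimpleGraph (Fin n))
    (hsig : ∀ i j : Fin n, i ≠ j → (G.Adj i j ↔ ∃ k : Fin n, s k = |s i - s j|))
    (hneg : ∀ i : Fin n, s i < 0 ↔ (i : ℕ) < m)
    (h0 : ∀ i : Fin n, s i ≠ 0)
    (hadj : ∀ i : Fin n, i ≠ (⟨n - 1, by omega⟩ : Fin n) → 0 < s i →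
      G.Adj (⟨n - 1, by omega⟩ : Fin n) i) :
    ∀ (j : ℕ) (hj : 1 ≤ j) (hjn : m + j < n - j),
      s (⟨n - 1, by omega⟩ : Fin n) =
        s (⟨m + j - 1, by omega⟩ : Fin n) + s (⟨n - j - 1, by omega⟩ : Fin n) := by
  intro j hj hjn
  have hn3 : m + 2 * j + 1 ≤ n := by omega
  have hN : n - 1 < n := by omega
  set N : Fin n := ⟨n - 1, hN⟩ with hNdef
  -- every index i with m ≤ i ≤ n-2 has a "complement" k with s k = s N - s i
  have hex : ∀ i : ℕ, ∃ k : ℕ, m ≤ i → i ≤ n - 2 →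
      m ≤ k ∧ k ≤ n - 2 ∧
        ∀ (hk : k < n) (hi : i < n), s ⟨k, hk⟩ = s N - s ⟨i, hi⟩ := by
    intro i
    by_cases hcond : m ≤ i ∧ i ≤ n - 2
    · obtain ⟨him, hi2⟩ := hcond
      have hi : i < n := by omega
      set v : Fin n := ⟨i, hi⟩ with hvdef
      have hvpos : 0 < s v := by
        have h1 := h0 v
        have h2 := (hneg v).not
        simp only [hvdef] at h2
        have : ¬ s v < 0 := by
          rw [hneg v]
          simp [hvdef]; omega
        omega
      have hvN : v ≠ N := by
        simp only [hvdef, hNdef, ne_eq, Fin.mk.injEq]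
        omega
      have hvltN : v < N := by
        simp only [hvdef, hNdef, Fin.mk_lt_mk]
        omega
      have hsvN : s v < s N := hmono hvltN
      have hAdj := hadj v hvN hvpos
      obtain ⟨k, hk⟩ := (hsig N v (Ne.symm hvN)).mp hAdj
      have habs : |s N - s v| = s N - s v := abs_of_pos (by omega)
      rw [habs] at hk
      have hkpos : 0 < s k := by omega
      have hkm : m ≤ (k : ℕ) := by
        by_contra hc
        have := (hneg k).mpr (by omega)
        omega
      have hkN : s k < s N := by omega
      have hklt : k < N := hmono.lt_iff_lt.mp hkN
      have hk2 : (k : ℕ) ≤ n - 2 := by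
        have : (k : ℕ) < n - 1 := hklt
        omega
      refine ⟨(k : ℕ), fun _ _ => ⟨hkm, hk2, fun hkn hin => ?_⟩⟩
      have h1 : (⟨(k : ℕ), hkn⟩ : Fin n) = k := by
        apply Fin.ext; rfl
      have h2 : (⟨i, hin⟩ : Fin n) = v := rfl
      rw [h1, h2, hk]
    · exact ⟨0, fun h1 h2 => absurd ⟨h1, h2⟩ hcond⟩
  choose g hg using hex
  -- g is strictly decreasing on [m, n-2]
  have hanti : ∀ i j', m ≤ i → i < j' → j' ≤ n - 2 → g j' < g i := by
    intro i j' hi hij hj'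
    obtain ⟨hgi1, hgi2, hgi3⟩ := hg i hi (by omega)
    obtain ⟨hgj1, hgj2, hgj3⟩ := hg j' (by omega) hj'
    have hi' : i < n := by omega
    have hj'' : j' < n := by omega
    have e1 := hgi3 (by omega) hi'
    have e2 := hgj3 (by omega) hj''
    have hsij : s ⟨i, hi'⟩ < s ⟨j', hj''⟩ := hmono (by simp [Fin.mk_lt_mk]; omega)
    have : s (⟨g j', by omega⟩ : Fin n) < s (⟨g i, by omega⟩ : Fin n) := by
      rw [e1, e2]; omega
    have := hmono.lt_iff_lt.mp this
    simpa [Fin.mk_lt_mk] using this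
  have hrange : ∀ i, m ≤ i → i ≤ n - 2 → m ≤ g i ∧ g i ≤ n - 2 := by
    intro i h1 h2
    obtain ⟨a, b, _⟩ := hg i h1 h2
    exact ⟨a, b⟩
  have hrev := aux_rev_interval m (n - 2) g hrange hanti
  -- apply at i0 = n - j - 1
  set i0 : ℕ := n - j - 1 with hi0def
  have hi0m : m ≤ i0 := by omega
  have hi02 : i0 ≤ n - 2 := by omega
  have hgval : g i0 = m + j - 1 := by
    have := hrev i0 hi0m hi02
    omega
  obtain ⟨_, _, hgi3⟩ := hg i0 hi0m hi02
  have heq := hgi3 (by omega) (by omega)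
  have hfin : (⟨g i0, by omega⟩ : Fin n) = (⟨m + j - 1, by omega⟩ : Fin n) := by
    apply Fin.ext
    simpa using hgval
  rw [hfin] at heq
  have hfin2 : (⟨i0, by omega⟩ : Fin n) = (⟨n - j - 1, by omega⟩ : Fin n) := rfl
  rw [hfin2] at heq
  linarith [heq]
end

section
/- Let s > 0 and S = {s, 2s, ..., ns} \ {is} for some 1 ≤ i ≤ n, and let G be the graph on vertex set S with ps adjacent to qs iff |p−q|s ∈ S. Then for p ≠ i, 1 ≤ p ≤ n, the degree of the vertex ps equals ε + (n−4) if i < p ≤ n−i, ε + (n−2) if n−i < p < i, and ε + (n−3) otherwise, where ε = 1 if p = 2i and i ≤ ⌊n/2⌋, else ε = 0. -/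
/-- Degrees in the monograph generated by an arithmetic-progression signature with one
deletion. Let `S = {s, 2s, ..., ns} \ {is}`. For `p ≠ i`, `1 ≤ p ≤ n`, the degree of
the vertex `p*s` (the number of `q ∈ S` with `|q - p*s| ∈ S`) is
`ε + (n-4)` if `i < p ≤ n-i`, `ε + (n-2)` if `n-i < p < i`, and `ε + (n-3)` otherwise,
where `ε = 1` if `p = 2i` and `i ≤ ⌊n/2⌋`, else `ε = 0`. -/
theorem one_deletion_degrees (s : ℤ) (hs : 0 < s) (n i p : ℕ)
    (hi1 : 1 ≤ i) (hin : i ≤ n) (hp1 : 1 ≤ p) (hpn : p ≤ n) (hpi : p ≠ i) :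
    let S : Finset ℤ := ((Finset.Icc (1 : ℤ) n).image fun k => k * s) \ {(i : ℤ) * s}
    ((S.filter fun q => q ≠ (p : ℤ) * s ∧ |q - (p : ℤ) * s| ∈ S).card : ℤ) =
      (if p = 2 * i ∧ i ≤ n / 2 then 1 else 0) +
        (if i < p ∧ p ≤ n - i then (n : ℤ) - 4
         else if n - i < p ∧ p < i then (n : ℤ) - 2
         else (n : ℤ) - 3) := by
  intro S
  have hs0 : s ≠ 0 := hs.ne'
  have hinj : Function.Injective (fun k : ℤ => k * s) := mul_left_injective₀ hs0
  have hmemS : ∀ x : ℤ, x * s ∈ S ↔ (1 ≤ x ∧ x ≤ n ∧ x ≠ i) := by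
    intro x
    simp only [S, Finset.mem_sdiff, Finset.mem_image, Finset.mem_Icc, Finset.mem_singleton]
    constructor
    · rintro ⟨⟨k, ⟨hk1, hk2⟩, hke⟩, hne⟩
      have hkx : k = x := hinj hke
      subst hkx
      exact ⟨hk1, hk2, fun h => hne (by rw [h])⟩
    · rintro ⟨h1, h2, h3⟩
      exact ⟨⟨x, ⟨h1, h2⟩, rfl⟩, fun h => h3 (hinj h)⟩
  set R : Finset ℤ := insert (i:ℤ) (insert (p:ℤ) (insert ((p:ℤ)+i) {(p:ℤ)-i})) with hR
  have hA : S.filter (fun q => q ≠ (p : ℤ) * s ∧ |q - (p : ℤ) * s| ∈ S)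
      = (Finset.Icc (1:ℤ) n \ R).image (fun k => k * s) := by
    ext x
    constructor
    · intro hx
      rw [Finset.mem_filter] at hx
      obtain ⟨hxS, hxp, habs⟩ := hx
      obtain ⟨k, hk1, hk2, hki, rfl⟩ : ∃ k : ℤ, 1 ≤ k ∧ k ≤ n ∧ k ≠ i ∧ x = k * s := by
        have hx' := hxS
        simp only [S, Finset.mem_sdiff, Finset.mem_image, Finset.mem_Icc,
          Finset.mem_singleton] at hx'
        obtain ⟨⟨k, ⟨h1, h2⟩, hk⟩, hne⟩ := hx'
        exact ⟨k, h1, h2, fun h => hne (by rw [← hk, h]), hk.symm⟩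
      have hkp : k ≠ (p:ℤ) := fun h => hxp (by rw [h])
      have habs' : |k - (p:ℤ)| * s ∈ S := by
        rwa [show k * s - (p:ℤ) * s = (k - p) * s by ring, abs_mul, abs_of_pos hs] at habs
      rw [hmemS] at habs'
      obtain ⟨ha1, ha2, ha3⟩ := habs'
      rw [Finset.mem_image]
      refine ⟨k, ?_, rfl⟩
      rw [Finset.mem_sdiff, Finset.mem_Icc, hR]
      simp only [Finset.mem_insert, Finset.mem_singleton]
      refine ⟨⟨hk1, hk2⟩, ?_⟩
      rcases abs_choice (k - (p:ℤ)) with hd | hd <;> rw [hd] at ha1 ha2 ha3 <;> omega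
    · intro hx
      rw [Finset.mem_image] at hx
      obtain ⟨k, hk, rfl⟩ := hx
      rw [Finset.mem_sdiff, Finset.mem_Icc, hR] at hk
      simp only [Finset.mem_insert, Finset.mem_singleton] at hk
      obtain ⟨⟨hk1, hk2⟩, hk3⟩ := hk
      rw [Finset.mem_filter]
      refine ⟨(hmemS k).mpr ⟨hk1, hk2, fun h => hk3 (Or.inl h)⟩, ?_, ?_⟩
      · exact fun h => hk3 (Or.inr (Or.inl (hinj h)))
      · rw [show k * s - (p:ℤ) * s = (k - p) * s by ring, abs_mul, abs_of_pos hs, hmemS]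
        have h0 : (0:ℤ) ≤ |k - (p:ℤ)| := abs_nonneg _
        rcases abs_choice (k - (p:ℤ)) with hd | hd <;> rw [hd] at h0 ⊢ <;> omega
  rw [hA, Finset.card_image_of_injective _ hinj,
    ← Finset.sdiff_inter_self_left, Finset.card_sdiff_of_subset Finset.inter_subset_left]
  have hIcc : (Finset.Icc (1:ℤ) n).card = n := by
    rw [Int.card_Icc]; omega
  rcases Nat.lt_or_ge p i with hlt | hge
  · by_cases hpin : p + i ≤ n
    · -- case C
      have hE : Finset.Icc (1:ℤ) n ∩ R = {(i:ℤ), (p:ℤ), (p:ℤ)+i} := by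
        ext x
        simp only [Finset.mem_inter, Finset.mem_Icc, hR, Finset.mem_insert,
          Finset.mem_singleton]
        omega
      rw [hE, Finset.card_insert_of_notMem (by
            simp only [Finset.mem_insert, Finset.mem_singleton]; omega),
          Finset.card_insert_of_notMem (by simp only [Finset.mem_singleton]; omega),
          Finset.card_singleton, hIcc]
      split_ifs <;> omega
    · -- case F
      have hE : Finset.Icc (1:ℤ) n ∩ R = {(i:ℤ), (p:ℤ)} := by
        ext x
        simp only [Finset.mem_inter, Finset.mem_Icc, hR, Finset.mem_insert,
          Finset.mem_singleton]
        omega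
      rw [hE, Finset.card_pair (by omega), hIcc]
      split_ifs <;> omega
  · have hgt : i < p := lt_of_le_of_ne hge (Ne.symm hpi)
    by_cases hp2i : p = 2 * i
    · by_cases hpin : p + i ≤ n
      · -- case B
        have hE : Finset.Icc (1:ℤ) n ∩ R = {(i:ℤ), (p:ℤ), (p:ℤ)+i} := by
          ext x
          simp only [Finset.mem_inter, Finset.mem_Icc, hR, Finset.mem_insert,
            Finset.mem_singleton]
          omega
        rw [hE, Finset.card_insert_of_notMem (by
              simp only [Finset.mem_insert, Finset.mem_singleton]; omega),
            Finset.card_insert_of_notMem (by simp only [Finset.mem_singleton]; omega),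
            Finset.card_singleton, hIcc]
        split_ifs <;> omega
      · -- case E
        have hE : Finset.Icc (1:ℤ) n ∩ R = {(i:ℤ), (p:ℤ)} := by
          ext x
          simp only [Finset.mem_inter, Finset.mem_Icc, hR, Finset.mem_insert,
            Finset.mem_singleton]
          omega
        rw [hE, Finset.card_pair (by omega), hIcc]
        split_ifs <;> omega
    · by_cases hpin : p + i ≤ n
      · -- case A
        have hE : Finset.Icc (1:ℤ) n ∩ R = {(i:ℤ), (p:ℤ), (p:ℤ)+i, (p:ℤ)-i} := by
          ext x
          simp only [Finset.mem_inter, Finset.mem_Icc, hR, Finset.mem_insert,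
            Finset.mem_singleton]
          omega
        rw [hE, Finset.card_insert_of_notMem (by
              simp only [Finset.mem_insert, Finset.mem_singleton]; omega),
            Finset.card_insert_of_notMem (by
              simp only [Finset.mem_insert, Finset.mem_singleton]; omega),
            Finset.card_insert_of_notMem (by simp only [Finset.mem_singleton]; omega),
            Finset.card_singleton, hIcc]
        split_ifs <;> omega
      · -- case D
        have hE : Finset.Icc (1:ℤ) n ∩ R = {(i:ℤ), (p:ℤ), (p:ℤ)-i} := by
          ext x
          simp only [Finset.mem_inter, Finset.mem_Icc, hR, Finset.mem_insert,
            Finset.mem_singleton]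
          omega
        rw [hE, Finset.card_insert_of_notMem (by
              simp only [Finset.mem_insert, Finset.mem_singleton]; omega),
            Finset.card_insert_of_notMem (by simp only [Finset.mem_singleton]; omega),
            Finset.card_singleton, hIcc]
        split_ifs <;> omega
end

section
/- Let s > 0, n ≥ 9 odd, 1 ≤ i ≤ n, and S = {s, 2s, ..., ns} \ {is}. Then S is not a signature for any (n−4)-regular graph on n−1 vertices. -/
/-- For odd `n ≥ 9` and `1 ≤ i ≤ n`, the monograph generated by the signature
`S = {s, 2s, ..., ns} \ {is}` is not `(n-4)`-regular; in particular, `S` is not a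
signature for `G_{n-1}`, the complement of two disjoint `(n-1)/2`-cycles, which is
`(n-4)`-regular on `n-1` vertices. -/
theorem one_deletion_not_regular (s : ℤ) (hs : 0 < s) (n i : ℕ)
    (hn : 9 ≤ n) (hodd : Odd n) (hi1 : 1 ≤ i) (hin : i ≤ n) :
    let S : Finset ℤ := ((Finset.Icc (1 : ℤ) n).image fun k => k * s) \ {(i : ℤ) * s}
    ¬ ∀ a ∈ S, (S.filter fun b => b ≠ a ∧ |b - a| ∈ S).card = n - 4 := by
  intro S hreg
  have hsne : s ≠ 0 := hs.ne'
  have hinj : Function.Injective (fun k : ℤ => k * s) := fun a b hab => by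
    exact mul_right_cancel₀ hsne hab
  set T : Finset ℤ := Finset.Icc (1 : ℤ) n \ {(i : ℤ)} with hT
  have hS : S = T.image (fun k => k * s) := by
    rw [hT, Finset.image_sdiff _ _ hinj, Finset.image_singleton]
  have hmem : ∀ m : ℤ, m * s ∈ S ↔ m ∈ T := by
    intro m
    rw [hS]
    constructor
    · intro h
      obtain ⟨k, hk, he⟩ := Finset.mem_image.mp h
      rwa [← hinj he]
    · intro h; exact Finset.mem_image_of_mem _ h
  -- general reduction
  have key : ∀ j : ℤ, j ∈ T →
      (S.filter fun b => b ≠ j * s ∧ |b - j * s| ∈ S).card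
        = (T.filter fun k => k ≠ j ∧ |k - j| ∈ T).card := by
    intro j hj
    rw [hS, Finset.filter_image, Finset.card_image_of_injective _ hinj]
    congr 1
    apply Finset.filter_congr
    intro k hk
    have h1 : k * s ≠ j * s ↔ k ≠ j := by
      constructor
      · intro h he; exact h (by rw [he])
      · intro h he; exact h (hinj he)
    have h2 : |k * s - j * s| = |k - j| * s := by
      rw [← sub_mul, abs_mul, abs_of_pos hs]
    rw [h1, h2]
    constructor
    · rintro ⟨hne, hm⟩
      refine ⟨hne, ?_⟩
      obtain ⟨x, hx, he⟩ := Finset.mem_image.mp hm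
      rwa [← hinj he]
    · rintro ⟨hne, hm⟩
      exact ⟨hne, Finset.mem_image_of_mem _ hm⟩
  by_cases hione : i = 1
  · -- take j = 2
    subst hione
    have hj : (2 : ℤ) ∈ T := by
      rw [hT, Finset.mem_sdiff, Finset.mem_Icc, Finset.mem_singleton]
      omega
    have := hreg (2 * s) ((hmem 2).mpr hj)
    rw [key 2 hj] at this
    have hfe : (T.filter fun k => k ≠ 2 ∧ |k - 2| ∈ T) = Finset.Icc (4 : ℤ) n := by
      ext k
      simp only [Finset.mem_filter, hT, Finset.mem_sdiff, Finset.mem_Icc,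
        Finset.mem_singleton, Nat.cast_one]
      rcases le_or_gt 2 k with h | h
      · rw [abs_of_nonneg (by omega)]; omega
      · constructor
        · rintro ⟨⟨⟨h1, -⟩, h2⟩, -⟩
          omega
        · intro hk; exact absurd hk (by omega)
    rw [hfe, Int.card_Icc] at this
    omega
  · -- i ≥ 2, take j = 1
    have hi2 : 2 ≤ i := by omega
    have hj : (1 : ℤ) ∈ T := by
      rw [hT, Finset.mem_sdiff, Finset.mem_Icc, Finset.mem_singleton]
      omega
    have := hreg (1 * s) ((hmem 1).mpr hj)
    rw [key 1 hj] at this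
    by_cases hitop : i = n
    · have hfe : (T.filter fun k => k ≠ 1 ∧ |k - 1| ∈ T) = Finset.Icc (2 : ℤ) (n - 1) := by
        ext k
        simp only [Finset.mem_filter, hT, Finset.mem_sdiff, Finset.mem_Icc,
          Finset.mem_singleton]
        rcases le_or_gt 1 k with h | h
        · rw [abs_of_nonneg (by omega)]; omega
        · constructor
          · rintro ⟨⟨h1, -⟩, -⟩; omega
          · intro hk; exact absurd hk (by omega)
      rw [hfe, Int.card_Icc] at this
      subst hitop
      omega
    · have hfe : (T.filter fun k => k ≠ 1 ∧ |k - 1| ∈ T)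
          = Finset.Icc (2 : ℤ) n \ {(i : ℤ), (i : ℤ) + 1} := by
        ext k
        simp only [Finset.mem_filter, hT, Finset.mem_sdiff, Finset.mem_Icc,
          Finset.mem_singleton, Finset.mem_insert]
        rcases le_or_gt 1 k with h | h
        · rw [abs_of_nonneg (by omega)]; omega
        · constructor
          · rintro ⟨⟨h1, -⟩, -⟩; omega
          · intro hk; exact absurd hk (by omega)
      have hsub : ({(i : ℤ), (i : ℤ) + 1} : Finset ℤ) ⊆ Finset.Icc (2 : ℤ) n := by
        intro x hx
        simp only [Finset.mem_insert, Finset.mem_singleton] at hx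
        simp only [Finset.mem_Icc]
        rcases hx with rfl | rfl <;> omega
      have hpair : ({(i : ℤ), (i : ℤ) + 1} : Finset ℤ).card = 2 := by
        rw [Finset.card_insert_of_notMem (by simp), Finset.card_singleton]
      rw [hfe, Finset.card_sdiff_of_subset hsub, hpair, Int.card_Icc] at this
      omega
end

section
/- If P = {p, t, t+s, t+2s, t+3s, t+4s} with t > 0, s > 0, p < 0, then P is not a signature for M_6. -/
/-- `M₆` is the 6-vertex, 11-edge graph whose complement is the disjoint union of a
single edge (on `{0,1}`) and a triangle (on `{2,3,4}`). -/
def M6 : SimpleGraph (Fin 6) :=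
  (SimpleGraph.fromEdgeSet {s(0, 1), s(2, 3), s(2, 4), s(3, 4)})ᶜ

def madj (a b : Fin 6) : Bool :=
  a != b && !((a == 0 && b == 1) || (a == 1 && b == 0) || (a == 2 && b == 3) ||
    (a == 3 && b == 2) || (a == 2 && b == 4) || (a == 4 && b == 2) ||
    (a == 3 && b == 4) || (a == 4 && b == 3))

lemma M6_adj (a b : Fin 6) : M6.Adj a b ↔ madj a b = true := by
  simp only [M6, SimpleGraph.compl_adj, SimpleGraph.fromEdgeSet_adj,
    Set.mem_insert_iff, Set.mem_singleton_iff, Sym2.eq_iff, madj]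
  revert a b; decide

set_option maxRecDepth 100000 in
set_option maxHeartbeats 4000000 in
lemma key : ∀ (m c0 c1 c2 c3 c4 : Fin 6),
    (c0 != c1 && c0 != c2 && c0 != c3 && c0 != c4 && c1 != c2 && c1 != c3 && c1 != c4 &&
     c2 != c3 && c2 != c4 && c3 != c4 &&
     (madj c0 c1 == decide ((m.val : ℤ) ≤ 1)) && (madj c0 c2 == decide ((m.val : ℤ) ≤ 2)) &&
     (madj c0 c3 == decide ((m.val : ℤ) ≤ 3)) && (madj c0 c4 == decide ((m.val : ℤ) ≤ 4)) &&
     (madj c1 c2 == decide ((m.val : ℤ) ≤ 1)) && (madj c1 c3 == decide ((m.val : ℤ) ≤ 2)) &&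
     (madj c1 c4 == decide ((m.val : ℤ) ≤ 3)) && (madj c2 c3 == decide ((m.val : ℤ) ≤ 1)) &&
     (madj c2 c4 == decide ((m.val : ℤ) ≤ 2)) && (madj c3 c4 == decide ((m.val : ℤ) ≤ 1))) = false := by
  decide

lemma key' (m : ℕ) (hm : m ≤ 5) (c0 c1 c2 c3 c4 : Fin 6) :
    (c0 != c1 && c0 != c2 && c0 != c3 && c0 != c4 && c1 != c2 && c1 != c3 && c1 != c4 &&
     c2 != c3 && c2 != c4 && c3 != c4 &&
     (madj c0 c1 == decide ((m : ℤ) ≤ 1)) && (madj c0 c2 == decide ((m : ℤ) ≤ 2)) &&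
     (madj c0 c3 == decide ((m : ℤ) ≤ 3)) && (madj c0 c4 == decide ((m : ℤ) ≤ 4)) &&
     (madj c1 c2 == decide ((m : ℤ) ≤ 1)) && (madj c1 c3 == decide ((m : ℤ) ≤ 2)) &&
     (madj c1 c4 == decide ((m : ℤ) ≤ 3)) && (madj c2 c3 == decide ((m : ℤ) ≤ 1)) &&
     (madj c2 c4 == decide ((m : ℤ) ≤ 2)) && (madj c3 c4 == decide ((m : ℤ) ≤ 1))) = false :=
  key ⟨m, by omega⟩ c0 c1 c2 c3 c4

set_option maxHeartbeats 2000000 in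
/-- If `P = {p, t, t+s, t+2s, t+3s, t+4s}` with `t > 0`, `s > 0`, `p < 0` (an arithmetic
progression of 5 non-negative numbers together with a negative number), then `P` is not
a signature for `M₆`. -/
theorem ap_plus_negative_not_signature_M6 (p t s : ℤ)
    (ht : 0 < t) (hs : 0 < s) (hp : p < 0) :
    ¬ ∃ π : {x // x ∈ ({p, t, t + s, t + 2 * s, t + 3 * s, t + 4 * s} : Finset ℤ)} ≃ Fin 6,
        ∀ a b : {x // x ∈ ({p, t, t + s, t + 2 * s, t + 3 * s, t + 4 * s} : Finset ℤ)},
          a ≠ b →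
            (M6.Adj (π a) (π b) ↔
              |(a : ℤ) - (b : ℤ)| ∈ ({p, t, t + s, t + 2 * s, t + 3 * s, t + 4 * s} : Finset ℤ)) := by
  rintro ⟨π, hπ⟩
  have hchar : ∀ x : ℤ, x ∈ ({p, t, t + s, t + 2 * s, t + 3 * s, t + 4 * s} : Finset ℤ) ↔
      x = p ∨ x = t ∨ x = t + s ∨ x = t + 2 * s ∨ x = t + 3 * s ∨ x = t + 4 * s := by
    intro x; simp [Finset.mem_insert]
  have hmem : ∀ k : ℤ, 0 ≤ k → k ≤ 4 →
      t + k * s ∈ ({p, t, t + s, t + 2 * s, t + 3 * s, t + 4 * s} : Finset ℤ) := by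
    intro k h0 h4
    interval_cases k <;> norm_num [Finset.mem_insert]
  have hup : ∀ d d' : ℤ, 1 ≤ d → d ≤ d' → d' ≤ 4 →
      d * s ∈ ({p, t, t + s, t + 2 * s, t + 3 * s, t + 4 * s} : Finset ℤ) →
      d' * s ∈ ({p, t, t + s, t + 2 * s, t + 3 * s, t + 4 * s} : Finset ℤ) := by
    intro d d' hd hdd hd4 hm
    have hex : ∃ k : ℤ, 0 ≤ k ∧ k ≤ 4 ∧ d * s = t + k * s := by
      rcases (hchar _).1 hm with h | h | h | h | h | h
      · exfalso; nlinarith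
      · exact ⟨0, by norm_num, by norm_num, by linarith⟩
      · exact ⟨1, by norm_num, by norm_num, by linarith⟩
      · exact ⟨2, by norm_num, by norm_num, by linarith⟩
      · exact ⟨3, by norm_num, by norm_num, by linarith⟩
      · exact ⟨4, by norm_num, by norm_num, by linarith⟩
    obtain ⟨k, hk0, hk4, hk⟩ := hex
    have hkd : k ≤ d - 1 := by nlinarith
    have heq : d' * s = t + (k + d' - d) * s := by
      rw [show (k + d' - d) * s = k * s + d' * s - d * s from by ring]; linarith
    have h0 : 0 ≤ k + d' - d := by linarith
    have h4 : k + d' - d ≤ 4 := by linarith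
    set k2 := k + d' - d with hk2
    rw [hchar]
    interval_cases k2 <;> norm_num at heq ⊢ <;> tauto
  -- classification: threshold m
  obtain ⟨m, hm5, hmQ⟩ : ∃ m : ℕ, m ≤ 5 ∧ ∀ d : ℤ, 1 ≤ d → d ≤ 4 →
      ((d * s ∈ ({p, t, t + s, t + 2 * s, t + 3 * s, t + 4 * s} : Finset ℤ)) ↔ (m : ℤ) ≤ d) := by
    by_cases h1 : (1 : ℤ) * s ∈ ({p, t, t + s, t + 2 * s, t + 3 * s, t + 4 * s} : Finset ℤ)
    · exact ⟨1, by norm_num, fun d hd1 hd4 =>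
        ⟨fun _ => by exact_mod_cast hd1, fun h => hup 1 d le_rfl hd1 hd4 h1⟩⟩
    by_cases h2 : (2 : ℤ) * s ∈ ({p, t, t + s, t + 2 * s, t + 3 * s, t + 4 * s} : Finset ℤ)
    · refine ⟨2, by norm_num, fun d hd1 hd4 => ⟨fun hdP => ?_, fun h =>
        hup 2 d (by norm_num) (by exact_mod_cast h) hd4 h2⟩⟩
      by_contra hc
      have : d = 1 := by push_cast at hc; omega
      subst this; exact h1 hdP
    by_cases h3 : (3 : ℤ) * s ∈ ({p, t, t + s, t + 2 * s, t + 3 * s, t + 4 * s} : Finset ℤ)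
    · refine ⟨3, by norm_num, fun d hd1 hd4 => ⟨fun hdP => ?_, fun h =>
        hup 3 d (by norm_num) (by exact_mod_cast h) hd4 h3⟩⟩
      by_contra hc
      have : d = 1 ∨ d = 2 := by push_cast at hc; omega
      rcases this with h | h <;> subst h
      · exact h1 hdP
      · exact h2 hdP
    by_cases h4 : (4 : ℤ) * s ∈ ({p, t, t + s, t + 2 * s, t + 3 * s, t + 4 * s} : Finset ℤ)
    · refine ⟨4, by norm_num, fun d hd1 hd4 => ⟨fun hdP => ?_, fun h =>
        hup 4 d (by norm_num) (by exact_mod_cast h) hd4 h4⟩⟩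
      by_contra hc
      have : d = 1 ∨ d = 2 ∨ d = 3 := by push_cast at hc; omega
      rcases this with h | h | h <;> subst h
      · exact h1 hdP
      · exact h2 hdP
      · exact h3 hdP
    · refine ⟨5, le_rfl, fun d hd1 hd4 => ⟨fun hdP => ?_, fun h => by exfalso; push_cast at h; omega⟩⟩
      exfalso
      have : d = 1 ∨ d = 2 ∨ d = 3 ∨ d = 4 := by omega
      rcases this with h | h | h | h <;> subst h
      · exact h1 hdP
      · exact h2 hdP
      · exact h3 hdP
      · exact h4 hdP
  -- the five AP vertices
  let A : ∀ k : ℤ, 0 ≤ k → k ≤ 4 →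
      {x // x ∈ ({p, t, t + s, t + 2 * s, t + 3 * s, t + 4 * s} : Finset ℤ)} :=
    fun k h0 h4 => ⟨t + k * s, hmem k h0 h4⟩
  have hAne : ∀ (k k' : ℤ) (h0 : 0 ≤ k) (h4 : k ≤ 4) (h0' : 0 ≤ k') (h4' : k' ≤ 4),
      k ≠ k' → A k h0 h4 ≠ A k' h0' h4' := by
    intro k k' h0 h4 h0' h4' hne h
    have hv := congrArg Subtype.val h
    simp only [A] at hv
    exact hne (mul_right_cancel₀ (ne_of_gt hs) (by linarith))
  have hπadj : ∀ (k k' d : ℤ) (h0 : 0 ≤ k) (h4 : k ≤ 4) (h0' : 0 ≤ k') (h4' : k' ≤ 4),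
      k < k' → k' - k = d →
      madj (π (A k h0 h4)) (π (A k' h0' h4')) = decide ((m : ℤ) ≤ d) := by
    intro k k' d h0 h4 h0' h4' hlt hd
    have hiff := hπ (A k h0 h4) (A k' h0' h4') (hAne k k' h0 h4 h0' h4' (ne_of_lt hlt))
    rw [M6_adj] at hiff
    have habs : |((A k h0 h4 : ℤ)) - ((A k' h0' h4' : ℤ))| = (k' - k) * s := by
      show |t + k * s - (t + k' * s)| = _
      rw [abs_of_nonpos (by nlinarith)]; ring
    rw [habs] at hiff
    rw [hmQ (k' - k) (by omega) (by omega)] at hiff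
    subst hd
    exact Bool.eq_iff_iff.mpr (by rw [decide_eq_true_eq]; exact hiff)
  have hK := key' m hm5 (π (A 0 (by norm_num) (by norm_num))) (π (A 1 (by norm_num) (by norm_num)))
    (π (A 2 (by norm_num) (by norm_num))) (π (A 3 (by norm_num) (by norm_num)))
    (π (A 4 (by norm_num) (by norm_num)))
  have hne' : ∀ (k k' : ℤ) (h0 : 0 ≤ k) (h4 : k ≤ 4) (h0' : 0 ≤ k') (h4' : k' ≤ 4), k ≠ k' →
      (π (A k h0 h4) != π (A k' h0' h4')) = true :=
    fun k k' h0 h4 h0' h4' hne =>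
      bne_iff_ne.mpr (π.injective.ne (hAne k k' h0 h4 h0' h4' hne))
  simp only [hπadj 0 1 1 (by norm_num) (by norm_num) (by norm_num) (by norm_num) (by norm_num) (by norm_num),
    hπadj 0 2 2 (by norm_num) (by norm_num) (by norm_num) (by norm_num) (by norm_num) (by norm_num),
    hπadj 0 3 3 (by norm_num) (by norm_num) (by norm_num) (by norm_num) (by norm_num) (by norm_num),
    hπadj 0 4 4 (by norm_num) (by norm_num) (by norm_num) (by norm_num) (by norm_num) (by norm_num),
    hπadj 1 2 1 (by norm_num) (by norm_num) (by norm_num) (by norm_num) (by norm_num) (by norm_num),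
    hπadj 1 3 2 (by norm_num) (by norm_num) (by norm_num) (by norm_num) (by norm_num) (by norm_num),
    hπadj 1 4 3 (by norm_num) (by norm_num) (by norm_num) (by norm_num) (by norm_num) (by norm_num),
    hπadj 2 3 1 (by norm_num) (by norm_num) (by norm_num) (by norm_num) (by norm_num) (by norm_num),
    hπadj 2 4 2 (by norm_num) (by norm_num) (by norm_num) (by norm_num) (by norm_num) (by norm_num),
    hπadj 3 4 1 (by norm_num) (by norm_num) (by norm_num) (by norm_num) (by norm_num) (by norm_num),
    hne' 0 1 (by norm_num) (by norm_num) (by norm_num) (by norm_num) (by norm_num),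
    hne' 0 2 (by norm_num) (by norm_num) (by norm_num) (by norm_num) (by norm_num),
    hne' 0 3 (by norm_num) (by norm_num) (by norm_num) (by norm_num) (by norm_num),
    hne' 0 4 (by norm_num) (by norm_num) (by norm_num) (by norm_num) (by norm_num),
    hne' 1 2 (by norm_num) (by norm_num) (by norm_num) (by norm_num) (by norm_num),
    hne' 1 3 (by norm_num) (by norm_num) (by norm_num) (by norm_num) (by norm_num),
    hne' 1 4 (by norm_num) (by norm_num) (by norm_num) (by norm_num) (by norm_num),
    hne' 2 3 (by norm_num) (by norm_num) (by norm_num) (by norm_num) (by norm_num),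
    hne' 2 4 (by norm_num) (by norm_num) (by norm_num) (by norm_num) (by norm_num),
    hne' 3 4 (by norm_num) (by norm_num) (by norm_num) (by norm_num) (by norm_num),
    beq_self_eq_true, Bool.and_self, Bool.and_true, Bool.true_and] at hK
  exact absurd hK (by simp)
end

section
/- For even n ≥ 8, no set of integers containing 0 is a signature for G_n, the complement of two disjoint cycles of length n/2. -/
/-- The disjoint union of two cycles of length `m`, on vertex set `Fin 2 × ZMod m`. -/
def twoCycles (m : ℕ) : SimpleGraph (Fin 2 × ZMod m) where
  Adj x y := x.1 = y.1 ∧ x ≠ y ∧ (x.2 - y.2 = 1 ∨ y.2 - x.2 = 1)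
  symm := by
    constructor
    rintro x y ⟨h1, h2, h3⟩
    exact ⟨h1.symm, h2.symm, h3.symm⟩
  loopless := by
    constructor
    rintro x ⟨-, h, -⟩
    exact h rfl

/-! Call `H` the union of the two cycles, so that distinct labels `s, t` are `H`-adjacent iff
`|s - t| ∉ S`. A positive label `w` is never `H`-adjacent to `0` (as `|0 - w| = w ∈ S`), so the two
`H`-neighbours of `0` are negative, and a negative label `b` is `H`-adjacent to the maximum `M`
(as `M - b > M`). Hence the negative labels are exactly the two neighbours of `0`, `M > 0`, and the
distinct vertices `0` and `M` share two neighbours on a cycle, which forces the cycles to have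
length `4`. Then let `p` be the largest label on the cycle not containing `0`: for a negative label
`q`, the label `p - q > p` lies on the cycle of `0` and is positive, so it is `M`. Both negative
labels are therefore `p - M`, a contradiction. -/

namespace twoCycles

variable {m : ℕ}

lemma eq_add_or_eq_sub_of_adj {x y : Fin 2 × ZMod m} (h : (twoCycles m).Adj x y) :
    y = x + (0, 1) ∨ y = x - (0, 1) := by
  obtain ⟨hfst, -, hsnd | hsnd⟩ := h
  · right
    ext
    · simp [hfst]
    · simp only [Prod.snd_sub]
      linear_combination -hsnd
  · left
    ext
    · simp [hfst]
    · simp only [Prod.snd_add]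
      linear_combination hsnd

lemma adj_add_single [Fact (1 < m)] (x : Fin 2 × ZMod m) :
    (twoCycles m).Adj x (x + (0, 1)) :=
  ⟨by simp, by simp, Or.inr (by simp)⟩

lemma adj_sub_single [Fact (1 < m)] (x : Fin 2 × ZMod m) :
    (twoCycles m).Adj x (x - (0, 1)) := by
  have h := (adj_add_single (x - (0, 1))).symm
  rwa [sub_add_cancel] at h

lemma eq_or_eq_of_adj {v a b c : Fin 2 × ZMod m} (hab : a ≠ b) (ha : (twoCycles m).Adj v a)
    (hb : (twoCycles m).Adj v b) (hc : (twoCycles m).Adj v c) : c = a ∨ c = b := by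
  rcases eq_add_or_eq_sub_of_adj ha with rfl | rfl <;>
    rcases eq_add_or_eq_sub_of_adj hb with rfl | rfl <;>
    rcases eq_add_or_eq_sub_of_adj hc with rfl | rfl <;> simp_all

lemma dvd_four_of_adj {u v : Fin 2 × ZMod m} (huv : u ≠ v)
    (h₁ : (twoCycles m).Adj (u + (0, 1)) v) (h₂ : (twoCycles m).Adj (u - (0, 1)) v) : m ∣ 4 := by
  have hv₁ : v = u + (0, 2) := by
    rcases eq_add_or_eq_sub_of_adj h₁ with h | h
    · rw [h]; ext <;> simp [add_assoc, one_add_one_eq_two]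
    · exact absurd (by simp [h]) huv
  have hv₂ : v = u - (0, 2) := by
    rcases eq_add_or_eq_sub_of_adj h₂ with h | h
    · exact absurd (by simp [h]) huv
    · rw [h]; ext <;> simp [sub_sub, one_add_one_eq_two]
  have h4 : ((4 : ℕ) : ZMod m) = 0 := by
    have := congrArg Prod.snd (hv₁.symm.trans hv₂)
    simp only [Prod.snd_add, Prod.snd_sub] at this
    push_cast
    linear_combination this
  exact (ZMod.natCast_eq_zero_iff 4 m).mp h4

lemma add_single_ne_sub_single (hm : 2 < m) (u : Fin 2 × ZMod m) :
    u + (0, 1) ≠ u - (0, 1) := by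
  intro h
  have h2 : ((2 : ℕ) : ZMod m) = 0 := by
    have := congrArg Prod.snd h
    simp only [Prod.snd_add, Prod.snd_sub] at this
    push_cast
    linear_combination this
  have := Nat.le_of_dvd two_pos ((ZMod.natCast_eq_zero_iff 2 m).mp h2)
  omega

lemma eq_add_two_of_fst_eq {x u : Fin 2 × ZMod 4} (h : x.1 = u.1) (h₀ : x ≠ u)
    (h₁ : x ≠ u + (0, 1)) (h₂ : x ≠ u - (0, 1)) : x = u + (0, 2) := by
  obtain ⟨i, a⟩ := x
  obtain ⟨j, b⟩ := u
  obtain rfl : i = j := h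
  simp only [ne_eq, Prod.mk_add_mk, Prod.mk_sub_mk, add_zero, sub_zero, Prod.mk.injEq,
    true_and] at *
  revert a b
  decide

end twoCycles

def IsSignature {V : Type*} (G : SimpleGraph V) (S : Finset ℤ) (π : S ≃ V) : Prop :=
  ∀ a b : S, a ≠ b → (G.Adj (π a) (π b) ↔ |(a : ℤ) - b| ∈ S)

namespace IsSignature

section

variable {V : Type*} {H : SimpleGraph V} {S : Finset ℤ} {π : S ≃ V}

lemma adj_iff_notMem (hπ : IsSignature Hᶜ S π) {a b : S} (hab : a ≠ b) :
    H.Adj (π a) (π b) ↔ |(a : ℤ) - b| ∉ S := by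
  rw [← hπ a b hab, SimpleGraph.compl_adj, not_and, not_not]
  exact ⟨fun h _ => h, fun h => h (π.injective.ne hab)⟩

lemma neg_of_adj_zero (hπ : IsSignature Hᶜ S π) (h0 : 0 ∈ S) {w : S}
    (h : H.Adj (π ⟨0, h0⟩) (π w)) : (w : ℤ) < 0 := by
  have hw := (hπ.adj_iff_notMem fun e => h.ne (congrArg π e)).mp h
  by_contra! hw0
  rw [zero_sub, abs_neg, abs_of_nonneg hw0] at hw
  exact hw w.2

lemma adj_max_of_neg (hπ : IsSignature Hᶜ S π) {a b : S} (ha : ∀ s ∈ S, s ≤ a)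
    (ha0 : 0 ≤ (a : ℤ)) (hb : (b : ℤ) < 0) : H.Adj (π a) (π b) := by
  have hab : a ≠ b := by rintro rfl; omega
  rw [hπ.adj_iff_notMem hab, abs_of_pos (by omega)]
  intro h
  have := ha _ h
  omega

lemma adj_max_of_adj_zero (hπ : IsSignature Hᶜ S π) (h0 : 0 ∈ S) {a : S} (ha : ∀ s ∈ S, s ≤ a)
    {x : V} (hx : H.Adj (π ⟨0, h0⟩) x) : H.Adj (π a) x := by
  have hneg := hπ.neg_of_adj_zero h0 (w := π.symm x) (by rwa [π.apply_symm_apply])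
  simpa using hπ.adj_max_of_neg ha (ha 0 h0) hneg

end

section

variable {m : ℕ} {S : Finset ℤ} {π : S ≃ Fin 2 × ZMod m}

lemma eq_add_or_eq_sub_of_neg (hπ : IsSignature (twoCycles m)ᶜ S π) (h0 : 0 ∈ S) (hm : 2 < m)
    {b : S} (hb : (b : ℤ) < 0) :
    π b = π ⟨0, h0⟩ + (0, 1) ∨ π b = π ⟨0, h0⟩ - (0, 1) := by
  have : Fact (1 < m) := ⟨by omega⟩
  obtain ⟨a, haS, ha⟩ := S.exists_max_image id ⟨0, h0⟩
  have ha' : ∀ s ∈ S, s ≤ (⟨a, haS⟩ : S) := ha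
  exact twoCycles.eq_or_eq_of_adj (twoCycles.add_single_ne_sub_single hm _)
    (hπ.adj_max_of_adj_zero h0 ha' (twoCycles.adj_add_single _))
    (hπ.adj_max_of_adj_zero h0 ha' (twoCycles.adj_sub_single _))
    (hπ.adj_max_of_neg ha' (ha 0 h0) hb)

lemma exists_max_pos (hπ : IsSignature (twoCycles m)ᶜ S π) (h0 : 0 ∈ S) (hm : 2 < m) :
    ∃ a : S, (∀ s ∈ S, s ≤ a) ∧ 0 < (a : ℤ) := by
  have : NeZero m := ⟨by omega⟩
  obtain ⟨a, haS, ha⟩ := S.exists_max_image id ⟨0, h0⟩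
  refine ⟨⟨a, haS⟩, ha, lt_of_not_ge fun ha0 => ?_⟩
  set u := π ⟨0, h0⟩
  have hsub : (Finset.univ : Finset (Fin 2 × ZMod m)) ⊆ {u, u + (0, 1), u - (0, 1)} := by
    intro x _
    obtain ⟨b, rfl⟩ := π.surjective x
    rcases ((ha b b.2).trans ha0).lt_or_eq with hb | hb
    · rcases hπ.eq_add_or_eq_sub_of_neg h0 hm hb with h | h <;> simp [h, u]
    · simp [show b = ⟨0, h0⟩ from Subtype.ext hb, u]
  have hcard := (Finset.card_le_card hsub).trans Finset.card_le_three
  rw [Finset.card_univ, Fintype.card_prod, ZMod.card, Fintype.card_fin] at hcard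
  omega

lemma eq_four (hπ : IsSignature (twoCycles m)ᶜ S π) (h0 : 0 ∈ S) (hm : 4 ≤ m) : m = 4 := by
  have : Fact (1 < m) := ⟨by omega⟩
  obtain ⟨a, ha, ha0⟩ := hπ.exists_max_pos h0 (by omega)
  have hne : π ⟨0, h0⟩ ≠ π a := π.injective.ne fun h => by simp [← h] at ha0
  have h4 := twoCycles.dvd_four_of_adj hne
    (hπ.adj_max_of_adj_zero h0 ha (twoCycles.adj_add_single _)).symm
    (hπ.adj_max_of_adj_zero h0 ha (twoCycles.adj_sub_single _)).symm
  have := Nat.le_of_dvd (by norm_num) h4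
  omega

end

section

variable {S : Finset ℤ} {π : S ≃ Fin 2 × ZMod 4}

lemma eq_add_two_of_pos (hπ : IsSignature (twoCycles 4)ᶜ S π) (h0 : 0 ∈ S) {x : S}
    (hx : 0 < (x : ℤ)) (hfst : (π x).1 = (π ⟨0, h0⟩).1) : π x = π ⟨0, h0⟩ + (0, 2) := by
  have : Fact (1 < 4) := ⟨by norm_num⟩
  have hnotadj : ¬ (twoCycles 4).Adj (π ⟨0, h0⟩) (π x) := fun h =>
    (hπ.neg_of_adj_zero h0 h).not_gt hx
  refine twoCycles.eq_add_two_of_fst_eq hfst ?_ ?_ ?_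
  · exact π.injective.ne fun h => by simp [h] at hx
  · exact fun h => hnotadj (h ▸ twoCycles.adj_add_single _)
  · exact fun h => hnotadj (h ▸ twoCycles.adj_sub_single _)

end

end IsSignature

theorem not_isSignature_compl_twoCycles_four {S : Finset ℤ} {π : S ≃ Fin 2 × ZMod 4}
    (h0 : 0 ∈ S) :
    ¬ IsSignature (twoCycles 4)ᶜ S π := by
  intro hπ
  have : Fact (1 < 4) := ⟨by norm_num⟩
  set u := π ⟨0, h0⟩
  obtain ⟨a, ha, ha0⟩ := hπ.exists_max_pos h0 (by norm_num)
  have hau : π a = u + (0, 2) := hπ.eq_add_two_of_pos h0 ha0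
    (by simpa using (hπ.adj_max_of_adj_zero h0 ha (twoCycles.adj_add_single u)).1)
  obtain ⟨p, hp, hpmax⟩ := (Finset.univ.filter fun w : S => (π w).1 ≠ u.1).exists_max_image
    (fun w => (w : ℤ)) ⟨π.symm (u.1 + 1, u.2), by simp⟩
  simp only [Finset.mem_filter, Finset.mem_univ, true_and] at hp hpmax
  have hp0 : 0 < (p : ℤ) := by
    by_contra! hle
    rcases hle.lt_or_eq with hneg | hzero
    · rcases hπ.eq_add_or_eq_sub_of_neg h0 (by norm_num) hneg with h | h <;> simp [h, u] at hp
    · exact hp (by rw [show p = ⟨0, h0⟩ from Subtype.ext hzero])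
  -- `p - q > p` lies on the cycle of `0`, whose only positive label is `a`
  have sub_eq_max : ∀ q : S, (π q).1 = u.1 → (q : ℤ) < 0 → (p : ℤ) - q = a := by
    intro q hq hq0
    have hqp : q ≠ p := by rintro rfl; exact hp hq
    have hmem : (p : ℤ) - q ∈ S := by
      have := (hπ q p hqp).mp ⟨π.injective.ne hqp, fun h => hp (h.1 ▸ hq)⟩
      rwa [abs_sub_comm, abs_of_pos (by omega)] at this
    have hfst : (π ⟨_, hmem⟩).1 = u.1 := by
      by_contra h
      have := hpmax _ h
      simp only at this
      omega
    have := hπ.eq_add_two_of_pos h0 (by simp only; omega) hfst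
    exact congrArg Subtype.val (π.injective (this.trans hau.symm))
  have hμ := sub_eq_max (π.symm (u + (0, 1))) (by simp)
    (hπ.neg_of_adj_zero h0 (by simpa using twoCycles.adj_add_single u))
  have hν := sub_eq_max (π.symm (u - (0, 1))) (by simp)
    (hπ.neg_of_adj_zero h0 (by simpa using twoCycles.adj_sub_single u))
  exact twoCycles.add_single_ne_sub_single (by norm_num) u
    (π.symm.injective (Subtype.ext (by omega)))

theorem not_isSignature_compl_twoCycles {m : ℕ} {S : Finset ℤ} {π : S ≃ Fin 2 × ZMod m}
    (hm : 4 ≤ m) (h0 : 0 ∈ S) : ¬ IsSignature (twoCycles m)ᶜ S π := by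
  intro hπ
  obtain rfl := hπ.eq_four h0 hm
  exact not_isSignature_compl_twoCycles_four h0 hπ

theorem no_zero_signature_Gn_general (n : ℕ) (hn : 8 ≤ n)
    (S : Finset ℤ) (h0 : (0 : ℤ) ∈ S) :
    ¬ ∃ π : {x // x ∈ S} ≃ (Fin 2 × ZMod (n / 2)),
        ∀ a b : {x // x ∈ S}, a ≠ b →
          ((twoCycles (n / 2))ᶜ.Adj (π a) (π b) ↔ |(a : ℤ) - (b : ℤ)| ∈ S) := by
  rintro ⟨π, hπ⟩
  exact not_isSignature_compl_twoCycles (by omega) h0 hπ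

/-- For even `n ≥ 8`, no set of integers containing `0` is a signature for `G_n`, the
complement of two disjoint cycles of length `n/2`. -/
theorem no_zero_signature_Gn (n : ℕ) (hn : 8 ≤ n) (heven : Even n)
    (S : Finset ℤ) (h0 : (0 : ℤ) ∈ S) :
    ¬ ∃ π : {x // x ∈ S} ≃ (Fin 2 × ZMod (n / 2)),
        ∀ a b : {x // x ∈ S}, a ≠ b →
          ((twoCycles (n / 2))ᶜ.Adj (π a) (π b) ↔ |(a : ℤ) - (b : ℤ)| ∈ S) :=
  no_zero_signature_Gn_general n hn S h0
end

section
/- Let S be a set signature for a monograph G with positive smallest element s_1 (a proper monograph), and let k = n − 1 − δ(G) be the codegree of G, where n = |S| and δ(G) is the minimum degree. Then S can be partitioned into at most k+1 arithmetic progressions with common difference s_1, and at least one such progression has at least n/(k+1) terms. -/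
/-- Fact 3.1 of Bloom–Hell–Taylor. Let `S` (the image of an injective positive labeling
`ℓ`) be a set signature for a proper monograph `G` on `n` vertices, with smallest element
`s₁` and codegree `k = n - 1 - δ(G)`. Then `S` can be partitioned into at most `k + 1`
arithmetic progressions with common difference `s₁`, at least one of which has at least
`n / (k + 1)` terms (i.e. `n ≤ |A| * (k + 1)` for some part `A`). -/
theorem partition_into_arithmetic_progressions {V : Type*} [Fintype V] [Nonempty V]
    [DecidableEq V] (G : SimpleGraph V) [DecidableRel G.Adj] (ℓ : V → ℤ)
    (hinj : Function.Injective ℓ) (hpos : ∀ v : V, 0 < ℓ v)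
    (hsig : ∀ v w : V, v ≠ w → (G.Adj v w ↔ ∃ u : V, ℓ u = |ℓ v - ℓ w|))
    (s1 : ℤ) (hs1mem : ∃ v : V, ℓ v = s1) (hs1min : ∀ v : V, s1 ≤ ℓ v) :
    ∃ P : Finset (Finset ℤ),
      P.card ≤ (Fintype.card V - 1 - G.minDegree) + 1 ∧
      (∀ A ∈ P, ∀ B ∈ P, A ≠ B → Disjoint A B) ∧
      P.biUnion id = Finset.univ.image ℓ ∧
      (∀ A ∈ P, ∃ (a : ℤ) (l : ℕ),
        A = (Finset.range l).image fun j : ℕ => a + (j : ℤ) * s1) ∧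
      ∃ A ∈ P, Fintype.card V ≤ A.card * ((Fintype.card V - 1 - G.minDegree) + 1) := by
  classical
  obtain ⟨v₁, hv₁⟩ := hs1mem
  set S : Finset ℤ := Finset.univ.image ℓ with hSdef
  have hmemS : ∀ x : ℤ, x ∈ S ↔ ∃ u, ℓ u = x := by
    intro x; simp [hSdef]
  have hs1pos : 0 < s1 := hv₁ ▸ hpos v₁
  have hs1S : s1 ∈ S := (hmemS s1).2 ⟨v₁, hv₁⟩
  have hminS : ∀ x ∈ S, s1 ≤ x := by
    intro x hx; obtain ⟨u, hu⟩ := (hmemS x).1 hx; exact hu ▸ hs1min u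
  have hSne : S.Nonempty := ⟨s1, hs1S⟩
  set M : ℤ := S.max' hSne with hM
  -- existence of an exit point upward
  have hexl : ∀ a : ℤ, ∃ l : ℕ, a + (l : ℤ) * s1 ∉ S := by
    intro a
    refine ⟨(M - a).toNat + 1, fun h => ?_⟩
    have h1 : a + (((M - a).toNat + 1 : ℕ) : ℤ) * s1 ≤ M := S.le_max' _ h
    have h2 : (M - a : ℤ) ≤ ((M - a).toNat : ℤ) := Int.self_le_toNat _
    have h3 : (1 : ℤ) ≤ s1 := hs1pos
    push_cast at h1
    nlinarith [Int.natCast_nonneg ((M - a).toNat)]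
  set L : ℤ → ℕ := fun a => Nat.find (hexl a) with hL
  have hLnot : ∀ a : ℤ, a + (L a : ℤ) * s1 ∉ S := fun a => Nat.find_spec (hexl a)
  have hLmem : ∀ a : ℤ, ∀ j : ℕ, j < L a → a + (j : ℤ) * s1 ∈ S := by
    intro a j hj
    exact not_not.mp (Nat.find_min (hexl a) hj)
  set part : ℤ → Finset ℤ := fun a => (Finset.range (L a)).image (fun j : ℕ => a + (j : ℤ) * s1)
    with hpart
  set starts : Finset ℤ := S.filter (fun a => a - s1 ∉ S) with hstarts
  have hpartmem : ∀ a x, x ∈ part a ↔ ∃ j : ℕ, j < L a ∧ x = a + (j : ℤ) * s1 := by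
    intro a x
    simp [hpart, eq_comm, and_comm, Finset.mem_image]
  -- key disjointness lemma
  have key : ∀ a ∈ starts, ∀ b ∈ starts, ∀ i j : ℕ, i < L a → j < L b →
      a + (i : ℤ) * s1 = b + (j : ℤ) * s1 → i ≤ j → a = b := by
    intro a ha b hb i j hi hj heq hij
    rcases eq_or_lt_of_le hij with h | h
    · subst h; linarith
    · exfalso
      have hbd : b + ((j - i - 1 : ℕ) : ℤ) * s1 ∈ S := hLmem b _ (by omega)
      have hcast : ((j - i - 1 : ℕ) : ℤ) = (j : ℤ) - i - 1 := by omega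
      have : a - s1 = b + ((j - i - 1 : ℕ) : ℤ) * s1 := by
        rw [hcast]; linear_combination heq
      rw [← this] at hbd
      exact (Finset.mem_filter.mp ha).2 hbd
  -- descent: existence of run starts
  have hexm : ∀ x : ℤ, ∃ m : ℕ, x - ((m : ℤ) + 1) * s1 ∉ S := by
    intro x
    refine ⟨(x - s1).toNat, fun h => ?_⟩
    have h1 : s1 ≤ x - (((x - s1).toNat : ℤ) + 1) * s1 := hminS _ h
    have h2 : (x - s1 : ℤ) ≤ ((x - s1).toNat : ℤ) := Int.self_le_toNat _
    have h3 : (1 : ℤ) ≤ s1 := hs1pos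
    nlinarith [Int.natCast_nonneg ((x - s1).toNat)]
  have hcover : ∀ x ∈ S, ∃ a ∈ starts, x ∈ part a := by
    intro x hx
    set m := Nat.find (hexm x) with hm
    have hdown : ∀ i : ℕ, i ≤ m → x - (i : ℤ) * s1 ∈ S := by
      intro i hi
      rcases Nat.eq_zero_or_pos i with h0 | h0
      · subst h0; simpa using hx
      · have hlt : i - 1 < m := by omega
        have h2 := not_not.mp (Nat.find_min (hexm x) hlt)
        have hc : (((i - 1 : ℕ) : ℤ) + 1) = (i : ℤ) := by omega
        rwa [hc] at h2
    set a := x - (m : ℤ) * s1 with hadef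
    refine ⟨a, ?_, ?_⟩
    · rw [hstarts, Finset.mem_filter]
      refine ⟨hdown m le_rfl, ?_⟩
      have hc : a - s1 = x - ((m : ℤ) + 1) * s1 := by rw [hadef]; ring
      rw [hc]; exact Nat.find_spec (hexm x)
    · rw [hpartmem]
      refine ⟨m, ?_, by rw [hadef]; ring⟩
      by_contra hcon
      push_neg at hcon
      have hin : a + ((L a : ℕ) : ℤ) * s1 ∈ S := by
        have h4 := hdown (m - L a) (by omega)
        have hc : x - ((m - L a : ℕ) : ℤ) * s1 = a + ((L a : ℕ) : ℤ) * s1 := by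
          have hc2 : ((m - L a : ℕ) : ℤ) = (m : ℤ) - (L a : ℤ) := by omega
          rw [hadef, hc2]; ring
        rwa [hc] at h4
      exact hLnot a hin
  -- counting starts via non-neighbors of v₁
  set T : Finset V := Finset.univ.filter (fun w => w ≠ v₁ ∧ ¬ G.Adj v₁ w) with hT
  have hTsub : starts.erase s1 ⊆ T.image ℓ := by
    intro a ha
    obtain ⟨hane, hamem⟩ := Finset.mem_erase.mp ha
    obtain ⟨haS, hanot⟩ := Finset.mem_filter.mp hamem
    obtain ⟨w, hw⟩ := (hmemS a).1 haS
    have hwne : w ≠ v₁ := fun h => hane (by rw [← hw, h, hv₁])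
    have hlt : s1 < a := lt_of_le_of_ne (hminS a haS) (Ne.symm hane)
    have hadj : ¬ G.Adj v₁ w := by
      intro hadj
      obtain ⟨u, hu⟩ := (hsig v₁ w (Ne.symm hwne)).1 hadj
      rw [hv₁, hw] at hu
      have habs : |s1 - a| = a - s1 := by rw [abs_sub_comm]; exact abs_of_pos (by linarith)
      rw [habs] at hu
      exact hanot ((hmemS _).2 ⟨u, hu⟩)
    exact Finset.mem_image.2 ⟨w, Finset.mem_filter.2 ⟨Finset.mem_univ w, hwne, hadj⟩, hw⟩
  have hTcard : T.card ≤ Fintype.card V - 1 - G.minDegree := by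
    have h1 : T = (insert v₁ (G.neighborFinset v₁))ᶜ := by
      ext w
      simp only [hT, Finset.mem_filter, Finset.mem_univ, true_and, Finset.mem_compl,
        Finset.mem_insert, SimpleGraph.mem_neighborFinset, not_or]
    rw [h1, Finset.card_compl]
    have h2 : (insert v₁ (G.neighborFinset v₁)).card = G.degree v₁ + 1 := by
      rw [Finset.card_insert_of_notMem (by simp), SimpleGraph.card_neighborFinset_eq_degree]
    rw [h2]
    have h3 := G.minDegree_le_degree v₁
    omega
  have hstartscard : starts.card ≤ (Fintype.card V - 1 - G.minDegree) + 1 := by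
    have h1 : starts ⊆ insert s1 (starts.erase s1) :=
      Finset.subset_insert_iff.mpr subset_rfl
    have h2 : starts.card ≤ (starts.erase s1).card + 1 :=
      le_trans (Finset.card_le_card h1) (Finset.card_insert_le _ _)
    have h3 : (starts.erase s1).card ≤ T.card :=
      le_trans (Finset.card_le_card hTsub) Finset.card_image_le
    omega
  -- assemble
  refine ⟨starts.image part, ?_, ?_, ?_, ?_, ?_⟩
  · exact le_trans Finset.card_image_le hstartscard
  · intro A hA B hB hAB
    obtain ⟨a, ha, rfl⟩ := Finset.mem_image.mp hA
    obtain ⟨b, hb, rfl⟩ := Finset.mem_image.mp hB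
    rw [Finset.disjoint_left]
    intro x hxa hxb
    obtain ⟨i, hi, rfl⟩ := (hpartmem a x).1 hxa
    obtain ⟨j, hj, heq⟩ := (hpartmem b _).1 hxb
    rcases le_total i j with h | h
    · exact hAB (by rw [key a ha b hb i j hi hj heq h])
    · exact hAB (by rw [key b hb a ha j i hj hi heq.symm h])
  · ext x
    simp only [Finset.mem_biUnion, id, ← hSdef]
    constructor
    · rintro ⟨A, hA, hxA⟩
      obtain ⟨a, ha, rfl⟩ := Finset.mem_image.mp hA
      obtain ⟨j, hj, rfl⟩ := (hpartmem a x).1 hxA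
      exact hLmem a j hj
    · intro hx
      obtain ⟨a, ha, hxa⟩ := hcover x hx
      exact ⟨part a, Finset.mem_image_of_mem _ ha, hxa⟩
  · intro A hA
    obtain ⟨a, _, rfl⟩ := Finset.mem_image.mp hA
    exact ⟨a, L a, rfl⟩
  · -- pigeonhole
    have hPne : (starts.image part).Nonempty := by
      obtain ⟨a, ha, _⟩ := hcover s1 hs1S
      exact ⟨part a, Finset.mem_image_of_mem _ ha⟩
    obtain ⟨A, hA, hAmax⟩ := Finset.exists_max_image (starts.image part) Finset.card hPne
    refine ⟨A, hA, ?_⟩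
    have hdisj : ∀ B ∈ starts.image part, ∀ C ∈ starts.image part, B ≠ C →
        Disjoint (id B) (id C) := by
      intro B hB C hC hBC
      simp only [id]
      obtain ⟨a, ha, rfl⟩ := Finset.mem_image.mp hB
      obtain ⟨b, hb, rfl⟩ := Finset.mem_image.mp hC
      rw [Finset.disjoint_left]
      intro x hxa hxb
      obtain ⟨i, hi, rfl⟩ := (hpartmem a x).1 hxa
      obtain ⟨j, hj, heq⟩ := (hpartmem b _).1 hxb
      rcases le_total i j with h | h
      · exact hBC (by rw [key a ha b hb i j hi hj heq h])
      · exact hBC (by rw [key b hb a ha j i hj hi heq.symm h])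
    have hUnion : (starts.image part).biUnion id = S := by
      ext x
      simp only [Finset.mem_biUnion, id]
      constructor
      · rintro ⟨B, hB, hxB⟩
        obtain ⟨a, ha, rfl⟩ := Finset.mem_image.mp hB
        obtain ⟨j, hj, rfl⟩ := (hpartmem a x).1 hxB
        exact hLmem a j hj
      · intro hx
        obtain ⟨a, ha, hxa⟩ := hcover x hx
        exact ⟨part a, Finset.mem_image_of_mem _ ha, hxa⟩
    have hScard : S.card = Fintype.card V := by
      rw [hSdef, Finset.card_image_of_injective _ hinj, Finset.card_univ]
    have hsum : ∑ B ∈ starts.image part, B.card = Fintype.card V := by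
      rw [← hScard, ← hUnion, Finset.card_biUnion hdisj]
      simp only [id]
    have hle : ∑ B ∈ starts.image part, B.card ≤ (starts.image part).card * A.card := by
      calc ∑ B ∈ starts.image part, B.card ≤ ∑ _B ∈ starts.image part, A.card :=
            Finset.sum_le_sum (fun B hB => hAmax B hB)
        _ = (starts.image part).card * A.card := by rw [Finset.sum_const, smul_eq_mul]
    have hPcard : (starts.image part).card ≤ (Fintype.card V - 1 - G.minDegree) + 1 :=
      le_trans Finset.card_image_le hstartscard
    calc Fintype.card V = ∑ B ∈ starts.image part, B.card := hsum.symm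
      _ ≤ (starts.image part).card * A.card := hle
      _ ≤ ((Fintype.card V - 1 - G.minDegree) + 1) * A.card :=
          Nat.mul_le_mul_right _ hPcard
      _ = A.card * ((Fintype.card V - 1 - G.minDegree) + 1) := Nat.mul_comm _ _
end

section
/- Let S be a set signature for a monograph G with codegree k, and let s < 0 be a negative element of S whose vertex has at least one neighbor. Then the set S⁺ of non-negative elements of S can be partitioned into at most k arithmetic progressions with common difference |s|. -/
/-- Let `S` (the image of an injective labeling `ℓ`) be a set signature for a monograph
`G` with codegree `k = n - 1 - δ(G)`, and let `s = ℓ v < 0` be a negative element of `S`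
whose vertex has at least one neighbor. Then the set `S⁺` of non-negative elements of
`S` can be partitioned into at most `k` arithmetic progressions with common difference
`|s|`. -/
theorem positive_part_partition {V : Type*} [Fintype V] [Nonempty V] [DecidableEq V]
    (G : SimpleGraph V) [DecidableRel G.Adj] (ℓ : V → ℤ)
    (hinj : Function.Injective ℓ)
    (hsig : ∀ v w : V, v ≠ w → (G.Adj v w ↔ ∃ u : V, ℓ u = |ℓ v - ℓ w|))
    (v : V) (hv : ℓ v < 0) (hdeg : ∃ w : V, G.Adj v w) :
    ∃ P : Finset (Finset ℤ),
      P.card ≤ Fintype.card V - 1 - G.minDegree ∧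
      (∀ A ∈ P, ∀ B ∈ P, A ≠ B → Disjoint A B) ∧
      P.biUnion id = (Finset.univ.image ℓ).filter (fun x => 0 ≤ x) ∧
      ∀ A ∈ P, ∃ (a : ℤ) (l : ℕ),
        A = (Finset.range l).image fun j : ℕ => a + (j : ℤ) * |ℓ v| := by
  classical
  set d : ℤ := -ℓ v with hd_def
  have hd : 0 < d := by omega
  have habs : |ℓ v| = d := by rw [abs_of_neg hv]
  set Sp : Finset ℤ := (Finset.univ.image ℓ).filter (fun x => 0 ≤ x) with hSp_def
  have hSp_nonneg : ∀ x ∈ Sp, 0 ≤ x := fun x hx => (Finset.mem_filter.mp hx).2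
  have hSp_le : ∀ x ∈ Sp, x ≤ (Finset.univ.image ℓ).max' ⟨ℓ v, by simp⟩ := by
    intro x hx
    exact Finset.le_max' _ _ (Finset.mem_filter.mp hx).1
  -- downward termination
  have hex_down : ∀ m : ℤ, ∃ i : ℕ, m - (i : ℤ) * d ∉ Sp := by
    intro m
    refine ⟨m.toNat + 1, fun hmem => ?_⟩
    have h1 := hSp_nonneg _ hmem
    have h2 : m ≤ (m.toNat : ℤ) := Int.self_le_toNat m
    push_cast at h1
    nlinarith
  set len : ℤ → ℕ := fun m => Nat.find (hex_down m) with hlen_def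
  have len_spec : ∀ m, m - (len m : ℤ) * d ∉ Sp := fun m => Nat.find_spec (hex_down m)
  have len_min : ∀ m, ∀ i : ℕ, i < len m → m - (i : ℤ) * d ∈ Sp := by
    intro m i hi
    have := Nat.find_min (hex_down m) hi
    simpa using this
  set A : ℤ → Finset ℤ := fun m =>
    (Finset.range (len m)).image (fun j : ℕ => (m - ((len m : ℤ) - 1) * d) + (j : ℤ) * d)
      with hA_def
  have hA_mem : ∀ m x, x ∈ A m ↔ ∃ i : ℕ, i < len m ∧ x = m - (i : ℤ) * d := by
    intro m x
    constructor
    · intro hx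
      obtain ⟨j, hj, rfl⟩ := Finset.mem_image.mp hx
      rw [Finset.mem_range] at hj
      refine ⟨len m - 1 - j, by omega, ?_⟩
      have hc : ((len m - 1 - j : ℕ) : ℤ) = (len m : ℤ) - 1 - j := by omega
      rw [hc]; ring
    · rintro ⟨i, hi, rfl⟩
      refine Finset.mem_image.mpr ⟨len m - 1 - i, Finset.mem_range.mpr (by omega), ?_⟩
      have hc : ((len m - 1 - i : ℕ) : ℤ) = (len m : ℤ) - 1 - i := by omega
      rw [hc]; ring
  set tops : Finset ℤ := Sp.filter (fun m => m + d ∉ Sp) with htops_def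
  refine ⟨tops.image A, ?_, ?_, ?_, ?_⟩
  · -- cardinality bound
    set nonNbrs : Finset V := Finset.univ.filter (fun u => ¬(u = v ∨ G.Adj v u)) with hnn_def
    have htops_sub : tops ⊆ nonNbrs.image ℓ := by
      intro m hm
      rw [htops_def, Finset.mem_filter] at hm
      obtain ⟨hmSp, hmtop⟩ := hm
      have hmSp' := hmSp
      rw [hSp_def, Finset.mem_filter, Finset.mem_image] at hmSp'
      obtain ⟨⟨u, _, hu⟩, hm0⟩ := hmSp'
      refine Finset.mem_image.mpr ⟨u, ?_, hu⟩
      rw [hnn_def, Finset.mem_filter]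
      refine ⟨Finset.mem_univ _, ?_⟩
      push_neg
      constructor
      · intro h; rw [h] at hu; omega
      · intro hadj
        obtain ⟨w, hw⟩ := (hsig v u (G.ne_of_adj hadj)).mp hadj
        apply hmtop
        rw [hSp_def, Finset.mem_filter]
        have habs2 : |ℓ v - ℓ u| = m + d := by rw [hu]; rw [abs_of_nonpos (by omega)]; ring
        refine ⟨Finset.mem_image.mpr ⟨w, Finset.mem_univ _, by rw [hw, habs2]⟩, by omega⟩
    have h1 : (tops.image A).card ≤ tops.card := Finset.card_image_le
    have h2 : tops.card ≤ (nonNbrs.image ℓ).card := Finset.card_le_card htops_sub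
    have h3 : (nonNbrs.image ℓ).card ≤ nonNbrs.card := Finset.card_image_le
    have h4 : (Finset.univ.filter (fun u => u = v ∨ G.Adj v u)).card = G.degree v + 1 := by
      have : Finset.univ.filter (fun u => u = v ∨ G.Adj v u)
          = insert v (G.neighborFinset v) := by
        ext u
        simp [SimpleGraph.mem_neighborFinset]
      rw [this, Finset.card_insert_of_notMem (by simp), SimpleGraph.card_neighborFinset_eq_degree]
    have h5 := Finset.card_filter_add_card_filter_not
      (s := (Finset.univ : Finset V)) (p := fun u => u = v ∨ G.Adj v u)
    have h6 : G.minDegree ≤ G.degree v := G.minDegree_le_degree v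
    have h7 : G.degree v < Fintype.card V := G.degree_lt_card_verts v
    have h8 : (Finset.univ : Finset V).card = Fintype.card V := Finset.card_univ
    have h9 : (Finset.filter (fun u => ¬(u = v ∨ G.Adj v u)) Finset.univ).card
        = nonNbrs.card := by rw [hnn_def]
    omega
  · -- pairwise disjoint
    have key : ∀ m₁ ∈ tops, ∀ m₂ ∈ tops, m₁ < m₂ → ∀ x, x ∈ A m₁ → x ∉ A m₂ := by
      intro m₁ hm₁ m₂ hm₂ hlt x hx1 hx2
      obtain ⟨i₁, hi₁, he₁⟩ := (hA_mem m₁ x).mp hx1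
      obtain ⟨i₂, hi₂, he₂⟩ := (hA_mem m₂ x).mp hx2
      have hii : (i₁ : ℤ) < i₂ := by nlinarith [he₁ ▸ he₂]
      have hii' : i₁ < i₂ := by exact_mod_cast hii
      have hk : i₂ - i₁ - 1 < len m₂ := by omega
      have := len_min m₂ (i₂ - i₁ - 1) hk
      have hc : ((i₂ - i₁ - 1 : ℕ) : ℤ) = (i₂ : ℤ) - i₁ - 1 := by omega
      rw [hc] at this
      have heq : m₂ - ((i₂ : ℤ) - i₁ - 1) * d = m₁ + d := by
        have : m₂ - (i₂ : ℤ) * d = m₁ - (i₁ : ℤ) * d := by omega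
        nlinarith [this]
      rw [heq] at this
      rw [htops_def, Finset.mem_filter] at hm₁
      exact hm₁.2 this
    intro X hX Y hY hne
    obtain ⟨m₁, hm₁, rfl⟩ := Finset.mem_image.mp hX
    obtain ⟨m₂, hm₂, rfl⟩ := Finset.mem_image.mp hY
    have hmne : m₁ ≠ m₂ := fun h => hne (by rw [h])
    rw [Finset.disjoint_left]
    intro x hx1 hx2
    rcases lt_or_gt_of_ne hmne with h | h
    · exact key m₁ hm₁ m₂ hm₂ h x hx1 hx2
    · exact key m₂ hm₂ m₁ hm₁ h x hx2 hx1
  · -- biUnion = Sp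
    ext x
    simp only [Finset.mem_biUnion, Finset.mem_image, id]
    constructor
    · rintro ⟨B, ⟨m, hm, rfl⟩, hxB⟩
      obtain ⟨i, hi, rfl⟩ := (hA_mem m x).mp hxB
      exact len_min m i hi
    · intro hx
      have hex_up : ∃ j : ℕ, x + ((j : ℤ) + 1) * d ∉ Sp := by
        set M := (Finset.univ.image ℓ).max' ⟨ℓ v, by simp⟩ with hM
        refine ⟨(M - x).toNat, fun hmem => ?_⟩
        have h1 := hSp_le _ hmem
        have h2 : M - x ≤ ((M - x).toNat : ℤ) := Int.self_le_toNat _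
        nlinarith
      set j0 := Nat.find hex_up with hj0
      have hspec : x + ((j0 : ℤ) + 1) * d ∉ Sp := Nat.find_spec hex_up
      have hmin : ∀ j : ℕ, j ≤ j0 → x + (j : ℤ) * d ∈ Sp := by
        intro j hj
        cases j with
        | zero => simpa using hx
        | succ k =>
          have hk : k < j0 := by omega
          have := Nat.find_min hex_up hk
          simp only [not_not] at this
          exact_mod_cast this
      set m := x + (j0 : ℤ) * d with hm
      have hmSp : m ∈ Sp := hmin j0 le_rfl
      have hmtops : m ∈ tops := by
        rw [htops_def, Finset.mem_filter]
        refine ⟨hmSp, ?_⟩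
        convert hspec using 2
        rw [hm]; ring
      have hxA : x ∈ A m := by
        rw [hA_mem]
        refine ⟨j0, ?_, by rw [hm]; ring⟩
        by_contra hcon
        push_neg at hcon
        have := hmin (j0 - (len m)) (by omega)
        have hc : ((j0 - len m : ℕ) : ℤ) = (j0 : ℤ) - len m := by omega
        rw [hc] at this
        apply len_spec m
        convert this using 1
        rw [hm]; ring
      exact ⟨A m, ⟨m, hmtops, rfl⟩, hxA⟩
  · -- each block is an AP
    intro B hB
    obtain ⟨m, hm, rfl⟩ := Finset.mem_image.mp hB
    refine ⟨m - ((len m : ℤ) - 1) * d, len m, ?_⟩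
    rw [hA_def]
    simp only [habs]
end

section
/- Let S be a set signature for a monograph G on n vertices with codegree k, exactly one negative element s_1, and 0 ∉ S. Let l be the length of the longest arithmetic progression in S with common difference |s_1|. Then among |s_1|, 2|s_1|, ..., (l−1)|s_1|, at most k−1 values are missing from S. -/
/-- Let `S` (the image of an injective labeling `ℓ`) be a set signature for a monograph
`G` on `n` vertices with codegree `k = n - 1 - δ(G)`, exactly one negative element `s₁`,
and `0 ∉ S`. If `l` is the length of the longest arithmetic progression contained in `S`
with common difference `|s₁|`, then among `|s₁|, 2|s₁|, ..., (l-1)|s₁|`, at most `k - 1`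
values are missing from `S`. -/
theorem few_multiples_missing {V : Type*} [Fintype V] [Nonempty V] [DecidableEq V]
    (G : SimpleGraph V) [DecidableRel G.Adj] (ℓ : V → ℤ)
    (hinj : Function.Injective ℓ)
    (hsig : ∀ v w : V, v ≠ w → (G.Adj v w ↔ ∃ u : V, ℓ u = |ℓ v - ℓ w|))
    (s1 : ℤ) (hs1mem : ∃ v : V, ℓ v = s1) (hs1neg : s1 < 0)
    (huniq : ∀ v : V, ℓ v < 0 → ℓ v = s1)
    (h0 : ∀ v : V, ℓ v ≠ 0)
    (l : ℕ)
    (hl : ∃ a : ℤ, ∀ j : ℕ, j < l → ∃ v : V, ℓ v = a + (j : ℤ) * |s1|)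
    (hlmax : ∀ a : ℤ, ¬ ∀ j : ℕ, j < l + 1 → ∃ v : V, ℓ v = a + (j : ℤ) * |s1|) :
    ((Finset.Icc 1 (l - 1)).filter fun j : ℕ => ∀ v : V, ℓ v ≠ (j : ℤ) * |s1|).card ≤
      (Fintype.card V - 1 - G.minDegree) - 1 := by
  have hdpos : (0:ℤ) < |s1| := abs_pos.mpr hs1neg.ne
  have hds : s1 = -|s1| := by rw [abs_of_neg hs1neg]; ring
  by_cases hl2 : l ≤ 1
  · have he : Finset.Icc 1 (l-1) = ∅ := Finset.Icc_eq_empty (by omega)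
    rw [he]
    simp
  push_neg at hl2
  obtain ⟨a, ha⟩ := hl
  choose w hw using ha
  have hsign : ∀ v : V, ℓ v = s1 ∨ 0 < ℓ v := by
    intro v
    rcases lt_trichotomy (ℓ v) 0 with h | h | h
    · exact Or.inl (huniq v h)
    · exact absurd h (h0 v)
    · exact Or.inr h
  -- all AP members are positive
  have hpos : ∀ j (h : j < l), 0 < a + (j:ℤ) * |s1| := by
    intro j hj
    by_contra hle
    push_neg at hle
    have h1 : ℓ (w j hj) = a + (j:ℤ) * |s1| := hw j hj
    rcases hsign (w j hj) with h2 | h2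
    · have heq : a + (j:ℤ) * |s1| = -|s1| := by rw [← h1, h2]; exact hds
      by_cases hj1 : j + 1 < l
      · have h3 : ℓ (w (j+1) hj1) = a + ((j+1:ℕ):ℤ) * |s1| := hw _ _
        have h4 : ℓ (w (j+1) hj1) = 0 := by
          push_cast at h3; linarith
        exact h0 _ h4
      · have hj1' : 1 ≤ j := by omega
        have hjl : j - 1 < l := by omega
        have h3 : ℓ (w (j-1) hjl) = a + ((j-1:ℕ):ℤ) * |s1| := hw _ _
        have hc : ((j-1:ℕ):ℤ) = (j:ℤ) - 1 := by
          have := Nat.cast_sub (R := ℤ) hj1'; push_cast at this ⊢; omega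
        have hneg : ℓ (w (j-1) hjl) < 0 := by rw [h3, hc]; nlinarith
        have h5 := huniq _ hneg
        rw [h3, hc] at h5
        nlinarith [heq, h5, hds, hdpos]
    · rw [h1] at h2; linarith
  have htl : l - 1 < l := by omega
  set t := w (l-1) htl with ht
  have hlt : ℓ t = a + ((l-1:ℕ):ℤ) * |s1| := hw _ _
  have hltc : ((l-1:ℕ):ℤ) = (l:ℤ) - 1 := by
    have := Nat.cast_sub (R := ℤ) (show 1 ≤ l by omega); push_cast at this ⊢; omega
  have hltpos : 0 < ℓ t := by rw [hlt]; exact hpos _ htl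
  obtain ⟨v1, hv1⟩ := hs1mem
  set N := (Finset.univ.erase t).filter (fun v => ¬ G.Adj t v) with hN
  set Miss := (Finset.Icc 1 (l-1)).filter (fun j : ℕ => ∀ v : V, ℓ v ≠ (j:ℤ) * |s1|) with hM
  set F : ℕ → V := fun j => w (l-1-j) (by omega) with hF
  have hFl : ∀ j, ℓ (F j) = a + ((l-1-j:ℕ):ℤ) * |s1| := fun j => hw _ _
  have hMj : ∀ j ∈ Miss, 1 ≤ j ∧ j ≤ l - 1 := by
    intro j hj
    rw [hM, Finset.mem_filter, Finset.mem_Icc] at hj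
    exact ⟨hj.1.1, hj.1.2⟩
  have hMne : ∀ j ∈ Miss, ∀ v : V, ℓ v ≠ (j:ℤ) * |s1| := by
    intro j hj
    exact (Finset.mem_filter.mp hj).2
  have hFmem : ∀ j ∈ Miss, F j ∈ N := by
    intro j hj
    obtain ⟨hj1, hj2⟩ := hMj j hj
    have hcast : ((l-1-j:ℕ):ℤ) = ((l-1:ℕ):ℤ) - (j:ℤ) := by
      have := Nat.cast_sub (R := ℤ) (show j ≤ l-1 by omega); push_cast at this ⊢; omega
    have hdiff : ℓ t - ℓ (F j) = (j:ℤ) * |s1| := by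
      rw [hlt, hFl, hcast]; ring
    have hjpos : (0:ℤ) < (j:ℤ) * |s1| :=
      mul_pos (by exact_mod_cast hj1) hdpos
    have hne : t ≠ F j := by
      intro h
      rw [h] at hdiff
      simp at hdiff
      rcases hdiff with h' | h'
      · omega
      · linarith
    rw [hN, Finset.mem_filter, Finset.mem_erase]
    refine ⟨⟨hne.symm, Finset.mem_univ _⟩, ?_⟩
    intro hadj
    obtain ⟨u, hu⟩ := (hsig t (F j) hne).mp hadj
    rw [hdiff, abs_of_pos hjpos] at hu
    exact hMne j hj u hu
  have hv1N : v1 ∈ N := by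
    have hne : t ≠ v1 := by
      intro h
      rw [h, hv1] at hltpos
      linarith
    rw [hN, Finset.mem_filter, Finset.mem_erase]
    refine ⟨⟨hne.symm, Finset.mem_univ _⟩, ?_⟩
    intro hadj
    obtain ⟨u, hu⟩ := (hsig t v1 hne).mp hadj
    have h1 : ℓ t - ℓ v1 = a + (l:ℤ) * |s1| := by
      rw [hlt, hltc, hv1]; linear_combination -hds
    have h2 : (0:ℤ) < a + (l:ℤ) * |s1| := by
      have h3 := hpos (l-1) htl
      rw [hltc] at h3
      nlinarith
    rw [h1, abs_of_pos h2] at hu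
    apply hlmax a
    intro j hjl1
    rcases Nat.lt_or_ge j l with h | h
    · exact ⟨w j h, hw j h⟩
    · have hjeq : j = l := by omega
      subst hjeq
      exact ⟨u, hu⟩
  have hinjOn : Set.InjOn F ↑Miss := by
    intro j hj j' hj' hEq
    obtain ⟨hj1, hj2⟩ := hMj j hj
    obtain ⟨hj1', hj2'⟩ := hMj j' hj'
    have e := congrArg ℓ hEq
    rw [hFl, hFl] at e
    have e2 : ((l-1-j:ℕ):ℤ) * |s1| = ((l-1-j':ℕ):ℤ) * |s1| := by linarith
    have e3 : ((l-1-j:ℕ):ℤ) = ((l-1-j':ℕ):ℤ) := mul_right_cancel₀ hdpos.ne' e2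
    have e4 : l-1-j = l-1-j' := by exact_mod_cast e3
    omega
  have hv1img : v1 ∉ Miss.image F := by
    rw [Finset.mem_image]
    rintro ⟨j, hj, hEq⟩
    have h1 := hFl j
    rw [hEq, hv1] at h1
    have hp := hpos (l-1-j) (by omega)
    linarith
  have hsub : insert v1 (Miss.image F) ⊆ N := by
    intro x hx
    rcases Finset.mem_insert.mp hx with h | h
    · subst h; exact hv1N
    · obtain ⟨j, hj, rfl⟩ := Finset.mem_image.mp h
      exact hFmem j hj
  have hcard1 : Miss.card + 1 ≤ N.card := by
    have h1 := Finset.card_le_card hsub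
    rw [Finset.card_insert_of_notMem hv1img, Finset.card_image_of_injOn hinjOn] at h1
    omega
  have hfilt : ((Finset.univ.erase t).filter (G.Adj t)) = G.neighborFinset t := by
    ext v
    simp only [Finset.mem_filter, Finset.mem_erase, Finset.mem_univ, true_and,
      SimpleGraph.mem_neighborFinset, and_true]
    constructor
    · exact fun h => h.2
    · intro h; exact ⟨(G.ne_of_adj h).symm, h⟩
  have hcardN : G.degree t + N.card = Fintype.card V - 1 := by
    have h1 := Finset.card_filter_add_card_filter_not
      (s := Finset.univ.erase t) (p := G.Adj t)
    rw [Finset.card_erase_of_mem (Finset.mem_univ t), Finset.card_univ, hfilt] at h1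
    rw [SimpleGraph.degree]
    rw [hN]
    convert h1 using 2
  have hdeg : G.minDegree ≤ G.degree t := G.minDegree_le_degree t
  have hn : 1 ≤ Fintype.card V := Fintype.card_pos
  omega
end
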